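/- arXiv:2108.02157 — 6 statements merged into one kernel-verified Lean document; each statement's English description precedes it below -/
import Mathlib

section
/- Let $V$ and $W$ be finite-dimensional complex vector spaces and let $m\colon \mathrm{Sym}^2 V \to W$ be a linear map such that $m(\alpha \cdot \alpha) \neq 0$ for every nonzero $\alpha \in V$. Then there exists a linear functional $\varphi \in W^*$ such that the symmetric bilinear form $(\alpha,\beta) \mapsto \varphi(m(\alpha\cdot\beta))$ on $V$ is nondegenerate. -/
open Module LinearMap Polynomial

lemma gram_card_le {V : Type*} [AddCommGroup V] [Module ℂ V] [FiniteDimensional ℂ V]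
    {ι : Type*} [Fintype ι] [DecidableEq ι] (F : V →ₗ[ℂ] V →ₗ[ℂ] ℂ) (v : ι → V)
    (h : (Matrix.of fun i j => F (v i) (v j)).det ≠ 0) :
    Fintype.card ι ≤ Module.finrank ℂ ↥(LinearMap.range F) := by
  have hli : LinearIndependent ℂ
      (fun i => (⟨F (v i), LinearMap.mem_range_self F (v i)⟩ : LinearMap.range F)) := by
    rw [Fintype.linearIndependent_iff]
    intro x hx
    have hx' : ∑ i, x i • F (v i) = 0 := by
      have := congrArg (Subtype.val) hx
      simpa using this
    by_contra hne
    push_neg at hne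
    obtain ⟨i0, hi0⟩ := hne
    have : ∃ y ≠ 0, Matrix.vecMul y (Matrix.of fun i j => F (v i) (v j)) = 0 := by
      refine ⟨x, fun h0 => hi0 (by simp [h0]), ?_⟩
      funext j
      have h2 : (∑ i, x i • F (v i)) (v j) = 0 := by rw [hx']; rfl
      simpa [Matrix.vecMul, dotProduct] using h2
    rw [Matrix.exists_vecMul_eq_zero_iff] at this
    exact h this
  simpa using hli.fintype_card_le_finrank

/-- If `m : Sym² V → W` (encoded as a symmetric bilinear map `m : V →ₗ V →ₗ W`)
satisfies `m α α ≠ 0` for all nonzero `α`, then there is `φ ∈ W*` such that the bilinear form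
`(α, β) ↦ φ (m α β)` is nondegenerate. -/
theorem stmt0 (V W : Type*) [AddCommGroup V] [Module ℂ V] [AddCommGroup W] [Module ℂ W]
    [FiniteDimensional ℂ V] [FiniteDimensional ℂ W]
    (m : V →ₗ[ℂ] V →ₗ[ℂ] W)
    (hsymm : ∀ α β : V, m α β = m β α)
    (hsq : ∀ α : V, α ≠ 0 → m α α ≠ 0) :
    ∃ φ : W →ₗ[ℂ] ℂ, ∀ α : V, (∀ β : V, φ (m α β) = 0) → α = 0 := by
  classical
  set r : (W →ₗ[ℂ] ℂ) → ℕ := fun φ => finrank ℂ ↥(LinearMap.range (m.compr₂ φ)) with hr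
  have hbdd : BddAbove (Set.range r) := by
    refine ⟨finrank ℂ (V →ₗ[ℂ] ℂ), ?_⟩
    rintro _ ⟨φ, rfl⟩
    exact Submodule.finrank_le _
  obtain ⟨φ0, hφ0⟩ : sSup (Set.range r) ∈ Set.range r :=
    Nat.sSup_mem (Set.range_nonempty r) hbdd
  have hmax : ∀ φ, r φ ≤ r φ0 := fun φ => by
    rw [hφ0]; exact le_csSup hbdd ⟨φ, rfl⟩
  refine ⟨φ0, fun α hα0 => ?_⟩
  by_contra hαne
  set B : V →ₗ[ℂ] V →ₗ[ℂ] ℂ := m.compr₂ φ0 with hB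
  have hBα : B α = 0 := by
    ext β; simpa [hB] using hα0 β
  have hBsymm : ∀ x y, B x y = B y x := fun x y => by simp [hB, hsymm x y]
  obtain ⟨ψ, hψ⟩ : ∃ ψ : W →ₗ[ℂ] ℂ, ψ (m α α) ≠ 0 := by
    by_contra h
    push_neg at h
    exact hsq α hαne ((Module.forall_dual_apply_eq_zero_iff ℂ (m α α)).mp h)
  set C : V →ₗ[ℂ] V →ₗ[ℂ] ℂ := m.compr₂ ψ with hC
  have hCαα : C α α ≠ 0 := hψ
  set K := LinearMap.ker B with hK
  have hαK : α ∈ K := by simp [hK, LinearMap.mem_ker, hBα]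
  have hKzero : ∀ x ∈ K, ∀ y, B x y = 0 := by
    intro x hx y
    rw [LinearMap.mem_ker] at hx
    simp [hx]
  have hKzero' : ∀ x, ∀ y ∈ K, B x y = 0 := fun x y hy => by
    rw [hBsymm]; exact hKzero y hy x
  obtain ⟨U, hUK⟩ := Submodule.exists_isCompl K
  set s := finrank ℂ U with hs
  let bU : Basis (Fin s) ℂ U := Module.finBasis ℂ U
  set v : Fin s → V := fun i => (bU i : V) with hv
  have hvU : ∀ i, v i ∈ U := fun i => (bU i).2
  -- the Gram matrix of B on the basis of U is invertible
  set G : Matrix (Fin s) (Fin s) ℂ := Matrix.of fun i j => B (v i) (v j) with hG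
  have hGdet : G.det ≠ 0 := by
    intro h0
    obtain ⟨x, hx0, hxG⟩ := (Matrix.exists_mulVec_eq_zero_iff).mpr h0
    set w : U := ∑ i, x i • bU i with hw
    have hwV : (w : V) = ∑ i, x i • v i := by simp [hw, hv]
    have hBjw : ∀ j, B (v j) (w : V) = 0 := by
      intro j
      have := congrFun hxG j
      simp only [Matrix.mulVec, dotProduct, hG, Matrix.of_apply] at this
      rw [hwV]
      simp only [map_sum, map_smul]
      simpa [smul_eq_mul, mul_comm] using this
    have hwK : (w : V) ∈ K := by
      rw [LinearMap.mem_ker]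
      ext y
      have hy : y ∈ U ⊔ K := by rw [hUK.symm.sup_eq_top]; trivial
      obtain ⟨u, hu, k, hk, rfl⟩ := Submodule.mem_sup.mp hy
      have hBu : B (w : V) u = 0 := by
        have hzero : ((B (w : V)).comp U.subtype) = 0 := by
          apply bU.ext
          intro i
          simpa using (hBsymm (v i) (w : V)) ▸ hBjw i
        simpa using congrFun (congrArg DFunLike.coe hzero) ⟨u, hu⟩
      have hBk : B (w : V) k = 0 := hKzero' _ _ hk
      simp [hBu, hBk]
    have hw0 : w = 0 := by
      have : (w : V) ∈ K ⊓ U := ⟨hwK, w.2⟩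
      rw [hUK.inf_eq_bot] at this
      exact Subtype.ext (by simpa using this)
    have : ∀ i, x i = 0 := by
      have hli := bU.linearIndependent
      rw [Fintype.linearIndependent_iff] at hli
      exact hli x (by rw [← hw]; exact hw0)
    exact hx0 (funext this)
  -- pencil on U ⊕ span α
  set ι := (Fin s) ⊕ Unit with hι
  set v' : ι → V := Sum.elim v (fun _ => α) with hv'
  set GB : Matrix ι ι ℂ := Matrix.of fun i j => B (v' i) (v' j) with hGB
  set GC : Matrix ι ι ℂ := Matrix.of fun i j => C (v' i) (v' j) with hGC
  have hGBα : ∀ i, GB i (Sum.inr ()) = 0 := fun i => hKzero' _ _ hαK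
  have hGBα' : ∀ j, GB (Sum.inr ()) j = 0 := fun j => hKzero _ hαK _
  set M : Matrix ι ι ℂ[X] := GB.map Polynomial.C + (Polynomial.X : ℂ[X]) • GC.map Polynomial.C with hM
  set u : ι → ℂ[X] := fun i => Polynomial.C (GC i (Sum.inr ())) with hu
  have hMcol : M = M.updateCol (Sum.inr ()) ((Polynomial.X : ℂ[X]) • u) := by
    ext i j
    rcases j with j | j
    · simp [Matrix.updateCol_apply]
    · simp [Matrix.updateCol_apply, hM, hu, hGBα i]
  set N : Matrix ι ι ℂ[X] := M.updateCol (Sum.inr ()) u with hN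
  have hdetM : M.det = Polynomial.X * N.det := by
    conv_lhs => rw [hMcol]
    rw [Matrix.det_updateCol_smul]
  have hN0 : N.map (Polynomial.evalRingHom 0) =
      Matrix.fromBlocks G (Matrix.of fun i (_ : Unit) => C (v i) α) 0
        (Matrix.of fun (_ : Unit) (_ : Unit) => C α α) := by
    ext i j
    rcases i with i | i <;> rcases j with j | j <;>
      simp [hN, Matrix.updateCol_apply, hM, hu, hGB, hGC, hv', hG,
        Matrix.fromBlocks, hKzero _ hαK]
  have hNdet : N.det ≠ 0 := by
    intro h0
    have : (N.map (Polynomial.evalRingHom 0)).det = 0 := by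
      rw [← RingHom.mapMatrix_apply, ← RingHom.map_det, h0, map_zero]
    rw [hN0, Matrix.det_fromBlocks_zero₂₁] at this
    have hd : (Matrix.of fun (_ : Unit) (_ : Unit) => C α α).det = C α α := by
      simp [Matrix.det_unique]
    rw [hd] at this
    exact (mul_ne_zero hGdet hCαα) this
  have hMdet : M.det ≠ 0 := by
    rw [hdetM]
    exact mul_ne_zero Polynomial.X_ne_zero hNdet
  obtain ⟨t, ht⟩ : ∃ t : ℂ, M.det.eval t ≠ 0 := by
    by_contra h0
    push_neg at h0
    exact hMdet (Polynomial.funext fun t => by simp [h0 t])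
  -- the perturbed form has rank ≥ s + 1
  set B' : V →ₗ[ℂ] V →ₗ[ℂ] ℂ := m.compr₂ (φ0 + t • ψ) with hB'
  have hB'eq : ∀ x y, B' x y = B x y + t * C x y := by
    intro x y; simp [hB', hB, hC]
  have hGram' : (Matrix.of fun i j => B' (v' i) (v' j)) = M.map (Polynomial.evalRingHom t) := by
    ext i j
    simp only [hM, Matrix.map_apply, Matrix.add_apply, Matrix.smul_apply, smul_eq_mul,
      Polynomial.eval_add, Polynomial.eval_mul, Polynomial.eval_X, Polynomial.eval_C,
      hGB, hGC, Matrix.of_apply, Polynomial.coe_evalRingHom]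
    rw [hB'eq]
  have hrankB' : s + 1 ≤ r (φ0 + t • ψ) := by
    have hdet' : (Matrix.of fun i j => B' (v' i) (v' j)).det ≠ 0 := by
      rw [hGram', ← RingHom.mapMatrix_apply, ← RingHom.map_det]
      simpa using ht
    have := gram_card_le B' v' hdet'
    simpa [hι] using this
  -- but r φ0 = s
  have hrs : r φ0 = s := by
    have h1 : r φ0 + finrank ℂ K = finrank ℂ V := by
      simpa [hr, hK, hB] using (m.compr₂ φ0).finrank_range_add_finrank_ker
    have h2 : finrank ℂ K + s = finrank ℂ V := Submodule.finrank_add_eq_of_isCompl hUK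
    omega
  have := hmax (φ0 + t • ψ)
  omega
end

section
/- Let $\mathbb{K}$ be a field of characteristic zero, let $n \geq 1$, $d \geq 2$, and let $J_d = (x_0^{d-1}, \dots, x_n^{d-1}) \subseteq \mathbb{K}[x_0,\dots,x_n]$. Then $H^{(n+1)(d-2)} \notin J_d$, where $H = \sum_{i=0}^n x_i$. -/
/-!
The ideal `(x₀^(d-1), …, xₙ^(d-1))` is a monomial ideal, so its elements have zero coefficient
at every monomial whose exponents are all `< d - 1`, such as `(x₀ ⋯ xₙ)^(d-2)`. In `H^((n+1)(d-2))`
that coefficient is a multinomial coefficient, which is nonzero in characteristic zero.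
-/

open MvPolynomial

namespace MvPolynomial

variable {σ R : Type*} [CommSemiring R]

theorem coeff_eq_zero_of_mem_span_X_pow {e : σ → ℕ} {p : MvPolynomial σ R}
    (hp : p ∈ Ideal.span (Set.range fun i => (X i : MvPolynomial σ R) ^ e i))
    {m : σ →₀ ℕ} (hm : ∀ i, m i < e i) : coeff m p = 0 := by
  have hspan : (Set.range fun i => (X i : MvPolynomial σ R) ^ e i)
      = (fun s => monomial s (1 : R)) '' Set.range fun i => Finsupp.single i (e i) := by
    rw [← Set.range_comp]
    simp only [Function.comp_def, X_pow_eq_monomial]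
  rw [hspan, mem_ideal_span_monomial_image] at hp
  by_contra hne
  obtain ⟨_, ⟨i, rfl⟩, hle⟩ := hp m (mem_support_iff.mpr hne)
  exact (hm i).not_ge (Finsupp.single_le_iff.mp hle)

theorem coeff_sum_X_pow_ne_zero [CharZero R] [Fintype σ] (m : σ →₀ ℕ) :
    coeff m ((∑ i, X i : MvPolynomial σ R) ^ m.sum fun _ k => k) ≠ 0 := by
  rw [coeff_sum_X_pow_of_fintype, if_pos rfl, Finsupp.multinomial_eq]
  exact_mod_cast (Nat.multinomial_pos _ _).ne'

theorem sum_X_pow_notMem_span_X_pow [CharZero R] [Fintype σ] {e : σ → ℕ} (m : σ →₀ ℕ)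
    (hm : ∀ i, m i < e i) :
    (∑ i, X i : MvPolynomial σ R) ^ (m.sum fun _ k => k)
      ∉ Ideal.span (Set.range fun i => (X i : MvPolynomial σ R) ^ e i) :=
  fun hp => coeff_sum_X_pow_ne_zero m (coeff_eq_zero_of_mem_span_X_pow hp hm)

end MvPolynomial

theorem stmt6_general {𝕂 : Type*} [Field 𝕂] [CharZero 𝕂] (n d : ℕ) (hd : 2 ≤ d) :
    (∑ i : Fin (n + 1), (X i : MvPolynomial (Fin (n + 1)) 𝕂)) ^ ((n + 1) * (d - 2))
      ∉ Ideal.span (Set.range fun i : Fin (n + 1) =>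
          (X i : MvPolynomial (Fin (n + 1)) 𝕂) ^ (d - 1)) := by
  let m : Fin (n + 1) →₀ ℕ := Finsupp.equivFunOnFinite.symm fun _ => d - 2
  have hdeg : (m.sum fun _ k => k) = (n + 1) * (d - 2) := by
    simp [m, Finsupp.sum_fintype]
  rw [← hdeg]
  exact sum_X_pow_notMem_span_X_pow m fun _ => by
    simp only [m, Finsupp.coe_equivFunOnFinite_symm]; omega

/-- In characteristic zero, `H^((n+1)(d-2)) ∉ J_d = (x₀^(d-1), …, xₙ^(d-1))`,
where `H = x₀ + ⋯ + xₙ`. -/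
theorem stmt6 {𝕂 : Type*} [Field 𝕂] [CharZero 𝕂] (n d : ℕ) (hn : 1 ≤ n) (hd : 2 ≤ d) :
    (∑ i : Fin (n + 1), (X i : MvPolynomial (Fin (n + 1)) 𝕂)) ^ ((n + 1) * (d - 2))
      ∉ Ideal.span (Set.range fun i : Fin (n + 1) =>
          (X i : MvPolynomial (Fin (n + 1)) 𝕂) ^ (d - 1)) :=
  stmt6_general n d hd
end

section
/- Let $\mathbb{K}$ be a field of characteristic zero, let $n \geq 2$ and $d \geq n+1$, and let $J_d = (x_0^{d-1}, \dots, x_n^{d-1}) \subseteq S = \mathbb{K}[x_0,\dots,x_n]$. Set $H = \sum_{i=0}^n x_i$. Then for every integer $0 \leq k \leq d-n-1$ and every nonzero homogeneous polynomial $G \in S$ of degree $k$, one has $G \cdot H^{d(n-1)} \notin J_d$. -/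
/-!
Let `c = (n + 1)(d - 2)`. Multiplication `E` by `H = ∑ xᵢ` and the operator
`F = ∑ᵢ ∂ᵢ ∘ (d - 1 - xᵢ ∂ᵢ)` satisfy `[E, F] = 2 · deg - c` on `S`, and both preserve `J_d`.
So `S / J_d` is an `sl₂`-module in which degree `j` has weight `2j - c`, and the usual
hard Lefschetz argument shows that `H ^ r` is injective on degree `j` modulo `J_d` as soon as
`2j + r ≤ c`: by induction on `j` one may assume `F G ∈ J_d`, and then
`F (H ^ (t+1) G) ≡ -(t + 1)(2j + t - c) H ^ t G` strips off the powers of `H` one at a time.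
For `r = d(n - 1)` the condition reads `k ≤ d - n - 1`, and `G ∉ J_d` since `deg G < d - 1`.
-/

open MvPolynomial

/-- `(E, F, 2 · deg - c)` behaves like an `sl₂`-triple on the graded pieces `V j`, the piece
`V j` having weight `2 j - c`. -/
structure IsGradedSl2Pair {K M : Type*} [Field K] [AddCommGroup M] [Module K M]
    (E F : Module.End K M) (V : ℕ → Submodule K M) (c : ℕ) : Prop where
  raise : ∀ j, ∀ v ∈ V j, E v ∈ V (j + 1)
  lower : ∀ j, ∀ v ∈ V (j + 1), F v ∈ V j
  lower_zero : ∀ v ∈ V 0, F v = 0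
  commutator : ∀ j, ∀ v ∈ V j, E (F v) - F (E v) = (2 * j - c : K) • v

namespace IsGradedSl2Pair

variable {K M : Type*} [Field K] [AddCommGroup M] [Module K M]
  {E F : Module.End K M} {V : ℕ → Submodule K M} {c j r : ℕ} {v : M}

lemma raise_pow (h : IsGradedSl2Pair E F V c) (hv : v ∈ V j) (t : ℕ) :
    (E ^ t) v ∈ V (j + t) := by
  induction t with
  | zero => simpa using hv
  | succ t ih => rw [pow_succ', Module.End.mul_apply, ← add_assoc]; exact h.raise _ _ ih

lemma lower_raise_pow_succ (h : IsGradedSl2Pair E F V c) (hv : v ∈ V j) (t : ℕ) :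
    F ((E ^ (t + 1)) v) =
      (E ^ (t + 1)) (F v) - ((t + 1) * (2 * j + t - c) : K) • (E ^ t) v := by
  induction t with
  | zero =>
    simp only [pow_one, pow_zero, Module.End.one_apply, Nat.cast_zero, zero_add, add_zero, one_mul]
    rw [← h.commutator j v hv]
    abel
  | succ t ih =>
    have hc := h.commutator _ _ (h.raise_pow hv (t + 1))
    have ih' := congrArg E ih
    rw [map_sub, map_smul, ← Module.End.mul_apply E (E ^ t), ← pow_succ'] at ih'
    rw [pow_succ' E (t + 1), Module.End.mul_apply, Module.End.mul_apply]
    push_cast at hc ⊢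
    linear_combination (norm := module) ih' - hc

variable [CharZero K] {W : Submodule K M}

lemma mem_of_lower_mem_of_raise_pow_mem (h : IsGradedSl2Pair E F V c)
    (hEW : Set.MapsTo E W W) (hFW : Set.MapsTo F W W) (hv : v ∈ V j) (hFv : F v ∈ W)
    (hle : 2 * j + r ≤ c) (hE : (E ^ r) v ∈ W) : v ∈ W := by
  induction r with
  | zero => simpa using hE
  | succ t ih =>
    refine ih (by omega) ?_
    have hcoef : ((t + 1) * (2 * j + t - c) : K) ≠ 0 := by
      refine mul_ne_zero (by exact_mod_cast t.succ_ne_zero) (sub_ne_zero.mpr ?_)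
      exact_mod_cast (by omega : 2 * j + t ≠ c)
    refine (W.smul_mem_iff hcoef).mp ?_
    rw [show _ • _ = (E ^ (t + 1)) (F v) - F ((E ^ (t + 1)) v) by
      rw [h.lower_raise_pow_succ hv t]; abel]
    exact W.sub_mem (Module.End.coe_pow E _ ▸ hEW.iterate _ hFv) (hFW hE)

lemma mem_of_raise_pow_mem (h : IsGradedSl2Pair E F V c)
    (hEW : Set.MapsTo E W W) (hFW : Set.MapsTo F W W) (hv : v ∈ V j)
    (hle : 2 * j + r ≤ c) (hE : (E ^ r) v ∈ W) : v ∈ W := by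
  induction j generalizing r v with
  | zero =>
    exact h.mem_of_lower_mem_of_raise_pow_mem hEW hFW hv (h.lower_zero v hv ▸ W.zero_mem) hle hE
  | succ j ih =>
    have hFv : F v ∈ W := by
      refine ih (r := r + 1) (h.lower j v hv) (by omega) ?_
      rw [show (E ^ (r + 1)) (F v) = F ((E ^ (r + 1)) v) +
          ((r + 1) * (2 * (j + 1 : ℕ) + r - c) : K) • (E ^ r) v by
        rw [h.lower_raise_pow_succ hv r]; abel]
      refine W.add_mem (hFW ?_) (W.smul_mem _ hE)
      rw [pow_succ', Module.End.mul_apply]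
      exact hEW hE
    exact h.mem_of_lower_mem_of_raise_pow_mem hEW hFW hv hFv hle hE

end IsGradedSl2Pair

namespace MvPolynomial

variable {σ R : Type*} [CommRing R]

/-- On `R[xᵢ] / (xᵢ ^ (m + 1))` this is `xᵢ ^ a ↦ a (m + 1 - a) xᵢ ^ (a - 1)`, the lowering
operator of the irreducible `sl₂`-module of dimension `m + 1` whose raising operator is
multiplication by `xᵢ`. -/
noncomputable def fermatLowerAt (m : ℕ) (i : σ) : Module.End R (MvPolynomial σ R) :=
  (pderiv i).toLinearMap ∘ₗ
    ((m + 1 : R) • LinearMap.id - LinearMap.mulLeft R (X i) ∘ₗ (pderiv i).toLinearMap)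

lemma fermatLowerAt_apply (m : ℕ) (i : σ) (p : MvPolynomial σ R) :
    fermatLowerAt m i p = (m : MvPolynomial σ R) * pderiv i p - X i * pderiv i (pderiv i p) := by
  simp only [fermatLowerAt, LinearMap.comp_apply, LinearMap.sub_apply, LinearMap.smul_apply,
    LinearMap.id_apply, LinearMap.mulLeft_apply, Derivation.coeFn_coe, smul_eq_C_mul]
  simp only [map_add, map_natCast, map_one, map_sub, pderiv_mul, pderiv_X_self,
    Derivation.map_natCast, Derivation.map_one_eq_zero]
  ring

lemma IsHomogeneous.fermatLowerAt {m j : ℕ} {i : σ} {p : MvPolynomial σ R}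
    (hp : p.IsHomogeneous (j + 1)) : (fermatLowerAt m i p).IsHomogeneous j := by
  have hq : ((m + 1 : R) • p - X i * pderiv i p).IsHomogeneous (j + 1) := by
    refine (homogeneousSubmodule σ R _).smul_mem _ hp |>.sub ?_
    simpa [add_comm] using (isHomogeneous_X R i).mul (hp.pderiv (i := i))
  exact hq.pderiv

lemma fermatLowerAt_eq_zero_of_isHomogeneous_zero (m : ℕ) (i : σ) {p : MvPolynomial σ R}
    (hp : p.IsHomogeneous 0) : fermatLowerAt m i p = 0 := by
  rw [← totalDegree_zero_iff_isHomogeneous, totalDegree_eq_zero_iff_eq_C] at hp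
  rw [hp, fermatLowerAt_apply, pderiv_C, map_zero, mul_zero, mul_zero, sub_zero]

lemma fermatLowerAt_mul_of_pderiv_eq_zero (m : ℕ) {i : σ} {a : MvPolynomial σ R}
    (ha : pderiv i a = 0) (p : MvPolynomial σ R) :
    fermatLowerAt m i (a * p) = a * fermatLowerAt m i p := by
  have hap : ∀ q, pderiv i (a * q) = a * pderiv i q := fun q => by
    rw [pderiv_mul, ha, zero_mul, zero_add]
  rw [fermatLowerAt_apply, fermatLowerAt_apply, hap, hap]
  ring

lemma fermatLowerAt_X_pow_mul_self (m : ℕ) (i : σ) (q : MvPolynomial σ R) :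
    fermatLowerAt m i (X i ^ (m + 1) * q) = X i ^ (m + 1) *
      -(((m : MvPolynomial σ R) + 2) * pderiv i q + X i * pderiv i (pderiv i q)) := by
  set P : MvPolynomial σ R := X i ^ (m + 1)
  have hP : X i * pderiv i P = ((m : MvPolynomial σ R) + 1) * P := by
    simp only [P, pderiv_pow, pderiv_X_self]; push_cast; ring
  have hP' : X i * pderiv i (pderiv i P) = (m : MvPolynomial σ R) * pderiv i P := by
    have := congrArg (pderiv i) hP
    simp only [pderiv_mul, map_add, pderiv_X_self, Derivation.map_natCast,
      Derivation.map_one_eq_zero] at this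
    linear_combination this
  rw [fermatLowerAt_apply]
  simp only [pderiv_mul, map_add]
  linear_combination (-q) * hP' + (-2 * pderiv i q) * hP

lemma X_mul_fermatLowerAt_sub (m : ℕ) (i : σ) (p : MvPolynomial σ R) :
    X i * fermatLowerAt m i p - fermatLowerAt m i (X i * p) =
      2 * X i * pderiv i p - (m : MvPolynomial σ R) * p := by
  rw [fermatLowerAt_apply, fermatLowerAt_apply]
  simp only [pderiv_mul, map_add, pderiv_X_self, Derivation.map_one_eq_zero]
  ring

variable (σ R) in
/-- Up to the units `m + 2`, the Jacobian ideal of `∑ i, X i ^ (m + 2)`, i.e. `J_{m+2}`. -/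
noncomputable abbrev fermatJacobianIdeal (m : ℕ) : Ideal (MvPolynomial σ R) :=
  Ideal.span (Set.range fun i => X i ^ (m + 1))

lemma notMem_fermatJacobianIdeal {m : ℕ} {p : MvPolynomial σ R} (hp : p ≠ 0)
    (hdeg : p.totalDegree ≤ m) : p ∉ fermatJacobianIdeal σ R m := by
  have hrange : (Set.range fun i => (X i : MvPolynomial σ R) ^ (m + 1)) =
      (fun s => monomial s (1 : R)) '' Set.range fun i => Finsupp.single i (m + 1) := by
    rw [← Set.range_comp]
    congr 1
    funext i
    exact X_pow_eq_monomial
  rw [fermatJacobianIdeal, hrange, mem_ideal_span_monomial_image]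
  obtain ⟨a, ha⟩ := ne_zero_iff.mp hp
  intro h
  obtain ⟨_, ⟨i, rfl⟩, hle⟩ := h a (mem_support_iff.mpr ha)
  have := (Finsupp.single_le_iff.mp hle).trans
    ((a.le_degree i).trans (le_totalDegree (mem_support_iff.mpr ha)))
  omega

lemma fermatLowerAt_mem_fermatJacobianIdeal [Fintype σ] {m : ℕ} (i : σ)
    {p : MvPolynomial σ R} (hp : p ∈ fermatJacobianIdeal σ R m) :
    fermatLowerAt m i p ∈ fermatJacobianIdeal σ R m := by
  obtain ⟨q, rfl⟩ := Ideal.mem_span_range_iff_exists_fun.mp hp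
  rw [map_sum]
  refine Ideal.sum_mem _ fun k _ => ?_
  rw [mul_comm]
  by_cases hk : k = i
  · subst hk
    rw [fermatLowerAt_X_pow_mul_self]
    exact Ideal.mul_mem_right _ _ (Ideal.subset_span ⟨k, rfl⟩)
  · rw [fermatLowerAt_mul_of_pderiv_eq_zero m (by simp [pderiv_X_of_ne hk])]
    exact Ideal.mul_mem_right _ _ (Ideal.subset_span ⟨k, rfl⟩)

variable [Fintype σ]

noncomputable def fermatLower (m : ℕ) : Module.End R (MvPolynomial σ R) :=
  ∑ i, fermatLowerAt m i

lemma fermatLower_mem_fermatJacobianIdeal {m : ℕ} {p : MvPolynomial σ R}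
    (hp : p ∈ fermatJacobianIdeal σ R m) : fermatLower m p ∈ fermatJacobianIdeal σ R m := by
  simpa [fermatLower] using
    Ideal.sum_mem _ fun i _ => fermatLowerAt_mem_fermatJacobianIdeal i hp

lemma sum_X_mul_fermatLower_sub {m j : ℕ} {p : MvPolynomial σ R} (hp : p.IsHomogeneous j) :
    (∑ i, X i) * fermatLower m p - fermatLower m ((∑ i, X i) * p) =
      (2 * j - Fintype.card σ * m : R) • p := by
  have hdiag : ∀ i, ∑ k, (X k * fermatLowerAt m i p - fermatLowerAt m i (X k * p)) =
      X i * fermatLowerAt m i p - fermatLowerAt m i (X i * p) := fun i => by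
    refine Finset.sum_eq_single i (fun k _ hki => ?_) (by simp)
    rw [fermatLowerAt_mul_of_pderiv_eq_zero m (pderiv_X_of_ne hki), sub_self]
  calc (∑ i, X i) * fermatLower m p - fermatLower m ((∑ i, X i) * p)
      = ∑ i, ∑ k, (X k * fermatLowerAt m i p - fermatLowerAt m i (X k * p)) := by
        simp only [fermatLower, LinearMap.sum_apply, Finset.sum_mul, Finset.mul_sum, map_sum,
          Finset.sum_sub_distrib]
        rw [Finset.sum_comm (f := fun k i => fermatLowerAt m i (X k * p))]
    _ = ∑ i, (2 * X i * pderiv i p - (m : MvPolynomial σ R) * p) := by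
        simp only [hdiag, X_mul_fermatLowerAt_sub]
    _ = (2 * j - Fintype.card σ * m : R) • p := by
        simp only [Finset.sum_sub_distrib, mul_assoc, ← Finset.mul_sum, hp.sum_X_mul_pderiv,
          Finset.sum_const, Finset.card_univ, smul_eq_C_mul]
        simp only [nsmul_eq_mul, map_sub, map_mul, map_natCast, map_ofNat]
        ring

section Field

variable {K : Type*} [Field K]

lemma isGradedSl2Pair_fermat (m : ℕ) :
    IsGradedSl2Pair (LinearMap.mulLeft K (∑ i, X i)) (fermatLower m)
      (homogeneousSubmodule σ K) (Fintype.card σ * m) where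
  raise j p hp := by
    simpa [add_comm] using (IsHomogeneous.sum _ _ 1 fun i _ => isHomogeneous_X K i).mul hp
  lower j p hp := by
    simpa [fermatLower] using IsHomogeneous.sum _ _ j fun i _ => hp.fermatLowerAt (m := m) (i := i)
  lower_zero p hp := by
    simp [fermatLower, fermatLowerAt_eq_zero_of_isHomogeneous_zero m _ hp]
  commutator j p hp := by
    simpa using sum_X_mul_fermatLower_sub (m := m) hp

theorem mul_sum_X_pow_notMem_fermatJacobianIdeal [CharZero K] {m k N : ℕ}
    {G : MvPolynomial σ K} (hG : G.IsHomogeneous k) (hG0 : G ≠ 0) (hkm : k ≤ m)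
    (hN : 2 * k + N ≤ Fintype.card σ * m) :
    G * (∑ i, X i) ^ N ∉ fermatJacobianIdeal σ K m := by
  intro hmem
  refine notMem_fermatJacobianIdeal hG0 (hG.totalDegree hG0 ▸ hkm) ?_
  refine (isGradedSl2Pair_fermat m).mem_of_raise_pow_mem
    (W := (fermatJacobianIdeal σ K m).restrictScalars K)
    (fun p hp => Ideal.mul_mem_left _ _ hp) (fun p hp => fermatLower_mem_fermatJacobianIdeal hp)
    hG hN ?_
  simpa [LinearMap.pow_mulLeft, mul_comm] using hmem

end Field

end MvPolynomial

/-- For `n ≥ 2`, `d ≥ n+1`, every `0 ≤ k ≤ d-n-1`, and every nonzero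
homogeneous `G` of degree `k`, one has `G · H^(d(n-1)) ∉ J_d = (x₀^(d-1), …, xₙ^(d-1))`,
where `H = x₀ + ⋯ + xₙ` (characteristic zero). -/
theorem stmt7 {𝕂 : Type*} [Field 𝕂] [CharZero 𝕂] (n d : ℕ) (hn : 2 ≤ n) (hd : n + 1 ≤ d)
    (k : ℕ) (hk : k ≤ d - (n + 1))
    (G : MvPolynomial (Fin (n + 1)) 𝕂) (hG : G.IsHomogeneous k) (hG0 : G ≠ 0) :
    G * (∑ i : Fin (n + 1), (X i : MvPolynomial (Fin (n + 1)) 𝕂)) ^ (d * (n - 1))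
      ∉ Ideal.span (Set.range fun i : Fin (n + 1) =>
          (X i : MvPolynomial (Fin (n + 1)) 𝕂) ^ (d - 1)) := by
  obtain ⟨m, rfl⟩ : ∃ m, d = m + 2 := ⟨d - 2, by omega⟩
  obtain ⟨n', rfl⟩ : ∃ n', n = n' + 1 := ⟨n - 1, by omega⟩
  refine mul_sum_X_pow_notMem_fermatJacobianIdeal hG hG0 (by omega) ?_
  have hkn : k + n' ≤ m := by omega
  rw [Fintype.card_fin, Nat.add_sub_cancel]
  nlinarith
end

section
/- Let $\mathbb{K}$ be a field of characteristic zero, $n \geq 1$, $d \geq 2$, and let $R = \mathbb{K}[x_0,\dots,x_n]/(x_0^{d-1},\dots,x_n^{d-1})$ be the Jacobian ring of the Fermat hypersurface of degree $d$. Then for all $0 \leq a \leq N := (n+1)(d-2)$, the multiplication map $R^a \times R^{N-a} \to R^N$ is a perfect pairing; in particular $\dim_{\mathbb{K}} R^a = \dim_{\mathbb{K}} R^{N-a}$ and $\dim_{\mathbb{K}} R^N = 1$ with $R^N$ spanned by the class of $(\prod_{i=0}^n x_i)^{d-2}$. -/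
open MvPolynomial Module

/-- The degree-`k` graded piece of the quotient of the polynomial ring by a
(homogeneous) ideal `I`: the image of the homogeneous polynomials of degree `k`. -/
noncomputable def gradedPiece {𝕂 : Type*} [Field 𝕂] {n : ℕ}
    (I : Ideal (MvPolynomial (Fin n) 𝕂)) (k : ℕ) :
    Submodule 𝕂 (MvPolynomial (Fin n) 𝕂 ⧸ I) :=
  (MvPolynomial.homogeneousSubmodule (Fin n) 𝕂 k).map (Ideal.Quotient.mkₐ 𝕂 I).toLinearMap

/-!
The monomials `X^m` with `m ≤ t` pointwise map to a basis of `𝕂[X]/(X i ^ (t i + 1))ᵢ`, and those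
of degree `a` to a basis of its degree-`a` piece. Complementation `m ↦ t - m` is a bijection
between the box monomials of degree `a` and of degree `|t| - a`, the only one of degree `|t|` is
`X^t`, and if `X^m` occurs in a reduced representative of `x ≠ 0` then `x * X^(t-m)` has nonzero
coefficient at `X^t`.
-/

namespace MvPolynomial

variable {σ R : Type*}

variable (R) in
/-- For constant `t = d - 2` this is the Jacobian ideal of the Fermat hypersurface of degree `d`. -/
noncomputable def boxIdeal [CommSemiring R] (t : σ →₀ ℕ) :
    Ideal (MvPolynomial σ R) :=
  Ideal.span (Set.range fun i => X i ^ (t i + 1))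

theorem mem_boxIdeal_iff [CommSemiring R] {t : σ →₀ ℕ} {p : MvPolynomial σ R} :
    p ∈ boxIdeal R t ↔ ∀ m ∈ p.support, ¬ m ≤ t := by
  have hgen : (Set.range fun i => (X i : MvPolynomial σ R) ^ (t i + 1)) =
      (monomial · 1) '' Set.range fun i => Finsupp.single i (t i + 1) := by
    rw [← Set.range_comp]
    simp [Function.comp_def, X_pow_eq_monomial]
  simp only [boxIdeal, hgen, mem_ideal_span_monomial_image, Set.exists_range_iff,
    Finsupp.single_le_iff, Nat.succ_le_iff]
  simp only [Finsupp.le_def, not_forall, not_le]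

section CommRing

variable [CommRing R] {t : σ →₀ ℕ}

theorem mk_boxIdeal_ne_zero {p : MvPolynomial σ R} {m : σ →₀ ℕ} (hm : m ≤ t)
    (hp : coeff m p ≠ 0) : Ideal.Quotient.mk (boxIdeal R t) p ≠ 0 := by
  rw [Ne, Ideal.Quotient.eq_zero_iff_mem, mem_boxIdeal_iff]
  exact fun h => h m (mem_support_iff.mpr hp) hm

theorem disjoint_restrictSupport_Iic_ker_mk :
    Disjoint (restrictSupport R (Set.Iic t))
      (LinearMap.ker (Ideal.Quotient.mkₐ R (boxIdeal R t)).toLinearMap) := by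
  rw [Submodule.disjoint_def]
  intro p hp hpJ
  by_contra hp0
  obtain ⟨m, hm⟩ := support_nonempty.mpr hp0
  exact mk_boxIdeal_ne_zero (hp hm) (mem_support_iff.mp hm) hpJ

theorem map_mk_restrictSupport_inter_Iic (s : Set (σ →₀ ℕ)) :
    (restrictSupport R s).map (Ideal.Quotient.mkₐ R (boxIdeal R t)).toLinearMap =
      (restrictSupport R (s ∩ Set.Iic t)).map
        (Ideal.Quotient.mkₐ R (boxIdeal R t)).toLinearMap := by
  simp only [restrictSupport_eq_span, Submodule.map_span, Set.image_image]
  refine le_antisymm ?_ (Submodule.span_mono (Set.image_mono Set.inter_subset_left))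
  rw [Submodule.span_le]
  rintro _ ⟨m, hm, rfl⟩
  by_cases hmt : m ≤ t
  · exact Submodule.subset_span ⟨m, ⟨hm, hmt⟩, rfl⟩
  · have hmJ : monomial m (1 : R) ∈ boxIdeal R t := by
      rw [mem_boxIdeal_iff]
      intro m' hm'
      rwa [Finset.mem_singleton.mp (support_monomial_subset hm')]
    simp [Ideal.Quotient.eq_zero_iff_mem.mpr hmJ]

end CommRing

end MvPolynomial

namespace Finsupp

variable {σ : Type*}

theorem degree_tsub_of_le {m t : σ →₀ ℕ} (h : m ≤ t) : (t - m).degree = t.degree - m.degree := by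
  have := congrArg degree (tsub_add_cancel_of_le h)
  rw [map_add] at this
  omega

theorem setOf_degree_eq_inter_Iic_self (t : σ →₀ ℕ) :
    {m | m.degree = t.degree} ∩ Set.Iic t = {t} := by
  ext m
  simp only [Set.mem_inter_iff, Set.mem_ofPred_eq, Set.mem_Iic, Set.mem_singleton_iff]
  refine ⟨fun ⟨hdeg, hle⟩ => le_antisymm hle ?_, fun h => ⟨h ▸ rfl, h.le⟩⟩
  have : (t - m).degree = 0 := by rw [degree_tsub_of_le hle, hdeg, Nat.sub_self]
  exact tsub_eq_zero_iff_le.mp ((degree_eq_zero_iff _).mp this)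

noncomputable def tsubLeftDegreeEquiv (t : σ →₀ ℕ) {a : ℕ} (ha : a ≤ t.degree) :
    ↥({m | m.degree = a} ∩ Set.Iic t) ≃ ↥({m | m.degree = t.degree - a} ∩ Set.Iic t) where
  toFun m := ⟨t - m, show degree _ = _ by rw [degree_tsub_of_le m.2.2, m.2.1],
    Set.mem_Iic.mpr tsub_le_self⟩
  invFun m := ⟨t - m, show degree _ = _ by rw [degree_tsub_of_le m.2.2, m.2.1]; omega,
    Set.mem_Iic.mpr tsub_le_self⟩
  left_inv m := Subtype.ext (tsub_tsub_cancel_of_le m.2.2)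
  right_inv m := Subtype.ext (tsub_tsub_cancel_of_le m.2.2)

end Finsupp

namespace MvPolynomial

variable {𝕂 : Type*} [Field 𝕂]

theorem finrank_map_mk_boxIdeal_restrictSupport {σ : Type*} {t : σ →₀ ℕ} (s : Set (σ →₀ ℕ)) :
    finrank 𝕂 ((restrictSupport 𝕂 s).map (Ideal.Quotient.mkₐ 𝕂 (boxIdeal 𝕂 t)).toLinearMap) =
      Nat.card ↥(s ∩ Set.Iic t) := by
  rw [map_mk_restrictSupport_inter_Iic, ← LinearMap.range_domRestrict,
    LinearMap.finrank_range_of_inj, finrank_eq_nat_card_basis (basisRestrictSupport 𝕂 _)]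
  exact LinearMap.injective_domRestrict_iff.mpr
    (disjoint_restrictSupport_Iic_ker_mk.mono_left (restrictSupport_mono _ Set.inter_subset_right))

variable {n : ℕ} {t : Fin n →₀ ℕ}

theorem gradedPiece_boxIdeal (a : ℕ) :
    gradedPiece (boxIdeal 𝕂 t) a = (restrictSupport 𝕂 ({m | m.degree = a} ∩ Set.Iic t)).map
      (Ideal.Quotient.mkₐ 𝕂 (boxIdeal 𝕂 t)).toLinearMap := by
  rw [gradedPiece, homogeneousSubmodule_eq_finsupp_supported]
  exact map_mk_restrictSupport_inter_Iic _

theorem finrank_gradedPiece_boxIdeal (a : ℕ) :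
    finrank 𝕂 (gradedPiece (boxIdeal 𝕂 t) a) = Nat.card ↥({m | m.degree = a} ∩ Set.Iic t) := by
  rw [gradedPiece, homogeneousSubmodule_eq_finsupp_supported]
  exact finrank_map_mk_boxIdeal_restrictSupport _

theorem finrank_gradedPiece_boxIdeal_tsub {a : ℕ} (ha : a ≤ t.degree) :
    finrank 𝕂 (gradedPiece (boxIdeal 𝕂 t) a) =
      finrank 𝕂 (gradedPiece (boxIdeal 𝕂 t) (t.degree - a)) := by
  simp only [finrank_gradedPiece_boxIdeal]
  exact Nat.card_congr (Finsupp.tsubLeftDegreeEquiv t ha)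

theorem gradedPiece_boxIdeal_degree :
    gradedPiece (boxIdeal 𝕂 t) t.degree =
      Submodule.span 𝕂 {Ideal.Quotient.mk (boxIdeal 𝕂 t) (monomial t 1)} := by
  rw [gradedPiece_boxIdeal, Finsupp.setOf_degree_eq_inter_Iic_self, restrictSupport_eq_span,
    Submodule.map_span, Set.image_singleton, Set.image_singleton]
  rfl

theorem finrank_gradedPiece_boxIdeal_degree :
    finrank 𝕂 (gradedPiece (boxIdeal 𝕂 t) t.degree) = 1 := by
  rw [finrank_gradedPiece_boxIdeal, Finsupp.setOf_degree_eq_inter_Iic_self, Nat.card_unique]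

theorem exists_mul_ne_zero_of_mem_gradedPiece_boxIdeal {a : ℕ}
    {x : MvPolynomial (Fin n) 𝕂 ⧸ boxIdeal 𝕂 t} (hx : x ∈ gradedPiece (boxIdeal 𝕂 t) a)
    (hx0 : x ≠ 0) :
    ∃ y ∈ gradedPiece (boxIdeal 𝕂 t) (t.degree - a), x * y ≠ 0 := by
  rw [gradedPiece_boxIdeal] at hx
  obtain ⟨q, hq, rfl⟩ := hx
  obtain ⟨m, hm⟩ := support_nonempty.mpr fun h : q = 0 => hx0 (by simp [h])
  obtain ⟨hdeg, hmt : m ≤ t⟩ := hq hm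
  refine ⟨Ideal.Quotient.mk _ (monomial (t - m) 1), ?_, ?_⟩
  · rw [gradedPiece_boxIdeal]
    refine Submodule.mem_map_of_mem
      ((monomial_mem_restrictSupport _).mpr (Or.inl ⟨?_, Set.mem_Iic.mpr tsub_le_self⟩))
    rw [Set.mem_ofPred_eq, Finsupp.degree_tsub_of_le hmt, hdeg]
  · rw [AlgHom.toLinearMap_apply, Ideal.Quotient.mkₐ_eq_mk, ← map_mul]
    refine mk_boxIdeal_ne_zero le_rfl ?_
    rw [coeff_mul_monomial', if_pos tsub_le_self, tsub_tsub_cancel_of_le hmt, mul_one]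
    exact mem_support_iff.mp hm

end MvPolynomial

theorem stmt15_general {𝕂 : Type*} [Field 𝕂] (n d : ℕ) (hd : 2 ≤ d)
    (J : Ideal (MvPolynomial (Fin (n + 1)) 𝕂))
    (hJ : J = Ideal.span (Set.range fun i : Fin (n + 1) =>
      (X i : MvPolynomial (Fin (n + 1)) 𝕂) ^ (d - 1)))
    (N : ℕ) (hN : N = (n + 1) * (d - 2)) :
    (∀ a ≤ N, ∀ x ∈ gradedPiece J a, x ≠ 0 →
        ∃ y ∈ gradedPiece J (N - a), x * y ≠ 0) ∧
    (∀ a ≤ N, finrank 𝕂 (gradedPiece J a) = finrank 𝕂 (gradedPiece J (N - a))) ∧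
    finrank 𝕂 (gradedPiece J N) = 1 ∧
    gradedPiece J N = Submodule.span 𝕂
      {Ideal.Quotient.mk J ((∏ i : Fin (n + 1), (X i : MvPolynomial (Fin (n + 1)) 𝕂)) ^ (d - 2))} := by
  set t : Fin (n + 1) →₀ ℕ := Finsupp.equivFunOnFinite.symm fun _ => d - 2
  have hJt : J = boxIdeal 𝕂 t := by
    rw [hJ, boxIdeal, show d - 1 = d - 2 + 1 by omega]
    rfl
  have hNt : N = t.degree := by simp [hN, t, Finsupp.degree_eq_sum]
  have htop : (∏ i, (X i : MvPolynomial (Fin (n + 1)) 𝕂)) ^ (d - 2) = monomial t 1 := by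
    rw [monomial_eq, C_1, one_mul, Finsupp.prod_fintype _ _ (fun _ => pow_zero _),
      ← Finset.prod_pow]
    rfl
  subst hJt hNt
  rw [htop]
  exact ⟨fun a _ x hx hx0 => exists_mul_ne_zero_of_mem_gradedPiece_boxIdeal hx hx0,
    fun a ha => finrank_gradedPiece_boxIdeal_tsub ha, finrank_gradedPiece_boxIdeal_degree,
    gradedPiece_boxIdeal_degree⟩

/-- For the Jacobian ring `R = 𝕂[x₀,…,xₙ]/(x₀^(d-1),…,xₙ^(d-1))` of the
Fermat hypersurface of degree `d` (char 𝕂 = 0, `n ≥ 1`, `d ≥ 2`) and `N = (n+1)(d-2)`: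
for all `a ≤ N` the multiplication pairing `R^a × R^(N-a) → R^N` is perfect
(nondegenerate, with `dim R^a = dim R^(N-a)`), `dim R^N = 1`, and `R^N` is spanned by the
class of `(∏ xᵢ)^(d-2)`. -/
theorem stmt15 {𝕂 : Type*} [Field 𝕂] [CharZero 𝕂] (n d : ℕ) (hn : 1 ≤ n) (hd : 2 ≤ d)
    (J : Ideal (MvPolynomial (Fin (n + 1)) 𝕂))
    (hJ : J = Ideal.span (Set.range fun i : Fin (n + 1) =>
      (X i : MvPolynomial (Fin (n + 1)) 𝕂) ^ (d - 1)))
    (N : ℕ) (hN : N = (n + 1) * (d - 2)) :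
    (∀ a ≤ N, ∀ x ∈ gradedPiece J a, x ≠ 0 →
        ∃ y ∈ gradedPiece J (N - a), x * y ≠ 0) ∧
    (∀ a ≤ N, finrank 𝕂 (gradedPiece J a) = finrank 𝕂 (gradedPiece J (N - a))) ∧
    finrank 𝕂 (gradedPiece J N) = 1 ∧
    gradedPiece J N = Submodule.span 𝕂
      {Ideal.Quotient.mk J ((∏ i : Fin (n + 1), (X i : MvPolynomial (Fin (n + 1)) 𝕂)) ^ (d - 2))} :=
  stmt15_general n d hd J hJ N hN
end

section
/- Let $\mathbb{K}$ be a field of characteristic zero, let $n \geq 2$ and $d \geq n+1$, and let $J_d = (x_0^{d-1},\dots,x_n^{d-1}) \subseteq S = \mathbb{K}[x_0,\dots,x_n]$, $H = \sum_{i=0}^n x_i$. Suppose $G \in S$ is homogeneous of degree $d-n-1$ with $G \cdot H^{d(n-1)} \in J_d$, and suppose that for all $i \neq j$ the polynomial $(\partial_{x_i} - \partial_{x_j})(G)$ vanishes. Then $G = 0$. -/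
/-!
Equal first partials and Euler's identity `∑ xᵢ ∂ᵢG = m G` give `m G = H ∂₀G`, where `∂₀G` again
has equal partials; by induction on the degree, `G = α Hᵐ`. Multiplying the hypothesis by
`H^(d-n-1)` puts `α H^((n+1)(d-2))` into `J_d`. Every element of the monomial ideal `J_d` has
coefficient zero at the socle monomial `(∏ xᵢ)^(d-2)`, whereas the coefficient of `H^((n+1)(d-2))`
there is a multinomial coefficient, nonzero in characteristic zero. Hence `α = 0`.
-/

namespace MvPolynomial

variable {σ R : Type*}

theorem pderiv_pderiv_comm [CommSemiring R] (i j : σ) (φ : MvPolynomial σ R) :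
    pderiv i (pderiv j φ) = pderiv j (pderiv i φ) := by
  classical
  ext m
  simp only [coeff_pderiv, add_right_comm m (Finsupp.single i 1), Finsupp.add_apply,
    Finsupp.single_apply]
  rcases eq_or_ne i j with rfl | hij
  · rfl
  · simp only [if_neg hij, if_neg hij.symm, add_zero]
    ring

theorem coeff_eq_zero_of_mem_span_X_pow_s16 [CommSemiring R] {k : ℕ} {φ : MvPolynomial σ R}
    (hφ : φ ∈ Ideal.span (Set.range fun i => (X i : MvPolynomial σ R) ^ k))
    {a : σ →₀ ℕ} (ha : ∀ i, a i < k) : coeff a φ = 0 := by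
  have hrange : (Set.range fun i => (X i : MvPolynomial σ R) ^ k) =
      (fun s => monomial s (1 : R)) '' Set.range fun i => Finsupp.single i k := by
    rw [← Set.range_comp]
    simp only [Function.comp_def, X_pow_eq_monomial]
  rw [hrange, mem_ideal_span_monomial_image] at hφ
  by_contra h
  obtain ⟨_, ⟨i, rfl⟩, hle⟩ := hφ a (mem_support_iff.mpr h)
  exact (ha i).not_ge (by simpa using hle i)

theorem eq_C_mul_sum_X_pow_of_pderiv_eq [Field R] [CharZero R] [Fintype σ] :
    ∀ (m : ℕ) {φ : MvPolynomial σ R}, φ.IsHomogeneous m →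
      (∀ i j, pderiv i φ = pderiv j φ) → ∃ α, φ = C α * (∑ i, X i) ^ m
  | 0, φ, hφ, _ => ⟨coeff 0 φ, by
      rw [pow_zero, mul_one]
      exact totalDegree_eq_zero_iff_eq_C.mp ((totalDegree_zero_iff_isHomogeneous σ).mpr hφ)⟩
  | m + 1, φ, hφ, hpderiv => by
    have euler := hφ.sum_X_mul_pderiv
    rcases isEmpty_or_nonempty σ with hσ | ⟨⟨i₀⟩⟩
    · refine ⟨0, ?_⟩
      simpa [eq_comm (a := (0 : MvPolynomial σ R)), Nat.cast_add_one_ne_zero] using euler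
    obtain ⟨β, hβ⟩ := eq_C_mul_sum_X_pow_of_pderiv_eq m (hφ.pderiv (i := i₀))
      fun i j => by rw [pderiv_pderiv_comm, hpderiv i i₀, ← pderiv_pderiv_comm,
        pderiv_pderiv_comm j, hpderiv j i₀, ← pderiv_pderiv_comm]
    have hm : ((m : R) + 1) ≠ 0 := Nat.cast_add_one_ne_zero m
    have hsum : ∑ i, X i * pderiv i φ = C β * (∑ i, X i) ^ (m + 1) := by
      simp_rw [hpderiv _ i₀, hβ, ← Finset.sum_mul]
      ring
    rw [hsum, nsmul_eq_mul, ← map_natCast C, Nat.cast_succ] at euler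
    refine ⟨β / (m + 1), ?_⟩
    rw [div_eq_inv_mul, C_mul, mul_assoc, euler, ← mul_assoc, ← C_mul, inv_mul_cancel₀ hm, C_1,
      one_mul]

theorem eq_zero_of_C_mul_sum_X_pow_mem_span_X_pow [CommSemiring R] [NoZeroDivisors R]
    [CharZero R] [Fintype σ] {k : ℕ} {α : R}
    (h : C α * (∑ i, X i : MvPolynomial σ R) ^ (Fintype.card σ * k) ∈
      Ideal.span (Set.range fun i => (X i : MvPolynomial σ R) ^ (k + 1))) :
    α = 0 := by
  classical
  set a : σ →₀ ℕ := Finsupp.equivFunOnFinite.symm fun _ => k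
  have hcoeff := coeff_eq_zero_of_mem_span_X_pow_s16 h (a := a) fun _ => Nat.lt_succ_self k
  have hdeg : a.sum (fun _ m => m) = Fintype.card σ * k := by
    simp [a, Finsupp.sum_fintype]
  rw [coeff_C_mul, coeff_sum_X_pow_of_fintype, if_pos hdeg] at hcoeff
  exact (mul_eq_zero.mp hcoeff).resolve_right (Nat.cast_ne_zero.mpr
    (a.multinomial_eq ▸ Nat.multinomial_pos _ _).ne')

end MvPolynomial

open MvPolynomial

/-- In characteristic zero, for `n ≥ 2`, `d ≥ n+1`,
`J_d = (x₀^(d-1),…,xₙ^(d-1))` and `H = x₀ + ⋯ + xₙ`: if `G` is homogeneous of degree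
`d-n-1`, `G·H^(d(n-1)) ∈ J_d`, and `(∂ᵢ - ∂ⱼ)G = 0` for all `i ≠ j`, then `G = 0`. -/
theorem stmt16 {𝕂 : Type*} [Field 𝕂] [CharZero 𝕂] (n d : ℕ) (hn : 2 ≤ n) (hd : n + 1 ≤ d)
    (G : MvPolynomial (Fin (n + 1)) 𝕂) (hG : G.IsHomogeneous (d - (n + 1)))
    (hJ : G * (∑ i : Fin (n + 1), (X i : MvPolynomial (Fin (n + 1)) 𝕂)) ^ (d * (n - 1))
      ∈ Ideal.span (Set.range fun i : Fin (n + 1) =>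
          (X i : MvPolynomial (Fin (n + 1)) 𝕂) ^ (d - 1)))
    (hder : ∀ i j : Fin (n + 1), i ≠ j → pderiv i G - pderiv j G = 0) :
    G = 0 := by
  obtain ⟨α, rfl⟩ := eq_C_mul_sum_X_pow_of_pderiv_eq (d - (n + 1)) hG fun i j => by
    rcases eq_or_ne i j with rfl | hij
    · rfl
    · exact sub_eq_zero.mp (hder i j hij)
  obtain ⟨l, rfl⟩ : ∃ l, n = l + 1 := ⟨n - 1, by omega⟩
  obtain ⟨e, rfl⟩ : ∃ e, d = l + 2 + e := ⟨d - (l + 2), by omega⟩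
  have hexp : (l + 2 + e - (l + 1 + 1)) + (l + 2 + e) * (l + 1 - 1) + (l + 2 + e - (l + 1 + 1)) =
      Fintype.card (Fin (l + 1 + 1)) * (l + e) := by
    simp only [Fintype.card_fin, Nat.add_sub_cancel, Nat.add_sub_cancel_left]
    ring
  have hsocle : C α * (∑ i, X i) ^ (Fintype.card (Fin (l + 1 + 1)) * (l + e)) ∈
      Ideal.span (Set.range fun i : Fin (l + 1 + 1) => (X i : MvPolynomial _ 𝕂) ^ (l + e + 1)) := by
    rw [← hexp, pow_add, pow_add, ← mul_assoc, ← mul_assoc,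
      show l + e + 1 = l + 2 + e - 1 by omega]
    exact Ideal.mul_mem_right _ _ hJ
  rw [eq_zero_of_C_mul_sum_X_pow_mem_span_X_pow hsocle, C_0, zero_mul]
end

section
/- Let $R = \bigoplus_{s=0}^N R^s$ be a graded Artinian Gorenstein $\mathbb{C}$-algebra with socle in degree $N$, fix $e \geq 1$ with $2e \leq N$, and suppose that for every $\eta \in R^{N-2e}$ the multiplication map $\cdot\eta \colon R^e \to R^{N-e}$ fails to be injective. Then the set $Y = \{\alpha \in R^e : \alpha^2 = 0\}$ contains, for each $\eta \in R^{N-2e}$ of maximal rank, every element of $\ker(\cdot\eta \colon R^e \to R^{N-e})$; in particular $Y \neq \{0\}$. -/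
/-!
Fix a linear form `ℓ` on `R` that is injective on the socle `𝒜 N`. Each `η ∈ 𝒜 (N - 2e)` gives
the symmetric bilinear form `B_η (x, y) = ℓ (η x y)` on `𝒜 e`, and by the Gorenstein pairing
`B_η` has the same rank `r` as `· η`. Let `η` have maximal rank and `η α = 0`. Then for every `γ`
the pencil `B_η + t B_γ` has rank at most `r`. So its Gram determinant on a basis of a complement
of `ker B_η`, extended by `α`, vanishes for every `t`. Since `α` spans a zero row and column of
`B_η`, the coefficient of `t` in that determinant is `B_γ (α, α)` times a nonzero minor of `B_η`.
Hence `ℓ (γ α²) = 0` for all `γ`, and so `α² = 0`. The non-injectivity hypothesis provides such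
an `α ≠ 0` for a maximal-rank `η`.
-/

open Module Polynomial
open LinearMap (BilinForm)

namespace Matrix

variable {K : Type*} [Field K] [Infinite K]

theorem exists_ne_zero_det_add_smul_ne_zero {n : Type*} [Fintype n] [DecidableEq n]
    {M : Matrix n n K} (hM : M.det ≠ 0) (N : Matrix n n K) :
    ∃ t : K, t ≠ 0 ∧ (M + t • N).det ≠ 0 := by
  set p : K[X] := (M.map C + (X : K[X]) • N.map C).det
  have hp (t : K) : p.eval t = (M + t • N).det := by
    rw [← coe_evalRingHom, RingHom.map_det]
    congr 1
    ext i j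
    simpa using mul_comm _ _
  by_contra! h
  have hXp : X * p = 0 := zero_of_eval_zero _ fun t => by
    by_cases ht : t = 0
    · simp [ht]
    · simp [hp, h t ht]
  apply hM
  simpa [hp] using congrArg (eval 0) ((mul_eq_zero.mp hXp).resolve_left X_ne_zero)

theorem exists_det_add_smul_ne_zero {n : ℕ} {A C : Matrix (Fin (n + 1)) (Fin (n + 1)) K}
    (hrow : ∀ j, A (Fin.last n) j = 0) (hcol : ∀ i, A i (Fin.last n) = 0)
    (hminor : (A.submatrix Fin.castSucc Fin.castSucc).det ≠ 0)
    (hcorner : C (Fin.last n) (Fin.last n) ≠ 0) :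
    ∃ t : K, (A + t • C).det ≠ 0 := by
  set M := A.updateCol (Fin.last n) fun i => C i (Fin.last n)
  set N := C.updateCol (Fin.last n) 0
  have hsplit (t : K) : (A + t • C).det = t * (M + t • N).det := by
    have hlast : (M + t • N).updateCol (Fin.last n) (fun i => C i (Fin.last n)) = M + t • N := by
      ext i j
      rcases Fin.eq_castSucc_or_eq_last j with ⟨j, rfl⟩ | rfl <;> simp [M, N]
    calc (A + t • C).det
        = ((M + t • N).updateCol (Fin.last n) (t • fun i => C i (Fin.last n))).det := by
          congr 1
          ext i j
          rcases Fin.eq_castSucc_or_eq_last j with ⟨j, rfl⟩ | rfl <;> simp [M, N, hcol]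
      _ = t * (M + t • N).det := by rw [det_updateCol_smul, hlast]
  have hM : M.det ≠ 0 := by
    have hsub : M.submatrix Fin.castSucc Fin.castSucc = A.submatrix Fin.castSucc Fin.castSucc := by
      ext i j
      simp [M]
    rw [det_succ_row M (Fin.last n), Fin.sum_univ_castSucc]
    simp [Fin.succAbove_last, hsub, hcorner, hminor, M, hrow]
  obtain ⟨t, ht0, ht⟩ := exists_ne_zero_det_add_smul_ne_zero hM N
  exact ⟨t, by rw [hsplit]; exact mul_ne_zero ht0 ht⟩

end Matrix

namespace LinearMap.BilinForm

variable {K V : Type*} [Field K] [AddCommGroup V] [Module K V]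

theorem det_toMatrix₂Aux_eq_zero_of_finrank_range_lt [FiniteDimensional K V]
    {ι : Type*} [Fintype ι] [DecidableEq ι] (B : BilinForm K V) (x : ι → V)
    (h : finrank K (range B) < Fintype.card ι) : (toMatrix₂Aux K x x B).det = 0 := by
  by_contra hdet
  have hrows : LinearIndependent K fun i => (LinearMap.pi fun j => Dual.eval K V (x j)) (B (x i)) :=
    Matrix.linearIndependent_rows_of_det_ne_zero hdet
  have hB : LinearIndependent K fun i => (⟨B (x i), mem_range_self B _⟩ : range B) :=
    (hrows.of_comp _).of_comp (range B).subtype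
  exact h.not_ge hB.fintype_card_le_finrank

theorem nondegenerate_restrict_of_isCompl_ker {B : BilinForm K V} (hB : B.IsSymm)
    {W : Submodule K V} (hW : IsCompl (ker B) W) : (B.restrict W).Nondegenerate := by
  refine (hB.restrict W).isRefl.nondegenerate_iff_separatingLeft.mpr fun u hu => ?_
  have hBu : B u = 0 := by
    ext v
    obtain ⟨k, hk, w, hw, rfl⟩ :=
      Submodule.mem_sup.mp (hW.sup_eq_top ▸ Submodule.mem_top : v ∈ ker B ⊔ W)
    simpa [hB.eq u k, mem_ker.mp hk] using hu ⟨w, hw⟩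
  exact Subtype.ext (hW.disjoint.le_bot ⟨hBu, u.2⟩)

theorem apply_apply_eq_zero_of_finrank_range_add_smul_le [Infinite K] [FiniteDimensional K V]
    {A C : BilinForm K V} (hA : A.IsSymm)
    (hrank : ∀ t : K, finrank K (range (A + t • C)) ≤ finrank K (range A))
    {α : V} (hα : A α = 0) : C α α = 0 := by
  classical
  by_contra hC
  obtain ⟨W, hW⟩ := (ker A).exists_isCompl
  set r := finrank K W
  have hr : finrank K (range A) = r := by
    have := A.finrank_range_add_finrank_ker
    have := Submodule.finrank_add_eq_of_isCompl hW
    omega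
  let w := Module.finBasis K W
  let x : Fin (r + 1) → V := Fin.snoc (fun i => (w i : V)) α
  have hminor : ((toMatrix₂Aux K x x A).submatrix Fin.castSucc Fin.castSucc) =
      BilinForm.toMatrix w (A.restrict W) := by
    ext i j
    simp [x, toMatrix₂Aux_apply, BilinForm.toMatrix_apply]
  obtain ⟨t, ht⟩ := Matrix.exists_det_add_smul_ne_zero (A := toMatrix₂Aux K x x A)
    (C := toMatrix₂Aux K x x C) (fun j => by simp [x, hα]) (fun i => by simp [x, hA.eq _ α, hα])
    (hminor ▸ (nondegenerate_iff_det_ne_zero w).mp (nondegenerate_restrict_of_isCompl_ker hA hW))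
    (by simpa [x] using hC)
  refine ht ?_
  rw [← map_smul, ← map_add]
  exact det_toMatrix₂Aux_eq_zero_of_finrank_range_lt _ _ (by simpa [hr] using hrank t)

end LinearMap.BilinForm

section MulForm

variable {K R : Type*} [Field K] [CommRing R] [Algebra K R]

def mulForm (ℓ : Dual K R) (V : Submodule K R) (η : R) : BilinForm K V :=
  ((LinearMap.mul K R).compr₂ ℓ).compl₂ V.subtype ∘ₗ (LinearMap.mulLeft K η ∘ₗ V.subtype)

variable (ℓ : Dual K R) (V : Submodule K R)

@[simp]
theorem mulForm_apply (η : R) (x y : V) : mulForm ℓ V η x y = ℓ (η * x * y) := rfl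

theorem mulForm_isSymm (η : R) : (mulForm ℓ V η).IsSymm :=
  ⟨fun x y => by simp [mul_right_comm]⟩

theorem mulForm_add_smul (η γ : R) (t : K) :
    mulForm ℓ V (η + t • γ) = mulForm ℓ V η + t • mulForm ℓ V γ := by
  ext x y
  simp [add_mul]

theorem finrank_range_mulForm_le [FiniteDimensional K V] (η : R) :
    finrank K (LinearMap.range (mulForm ℓ V η)) ≤ finrank K (V.map (LinearMap.mulLeft K η)) := by
  rw [mulForm, LinearMap.range_comp, LinearMap.range_comp, Submodule.range_subtype]
  exact Submodule.finrank_map_le _ _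

end MulForm

theorem exists_forall_finrank_map_mulLeft_le {K R : Type*} [Field K] [CommRing R] [Algebra K R]
    (V W : Submodule K R) [FiniteDimensional K V] :
    ∃ η ∈ W, ∀ η' ∈ W, finrank K (V.map (LinearMap.mulLeft K η')) ≤
      finrank K (V.map (LinearMap.mulLeft K η)) := by
  obtain ⟨_, ⟨η, hη, rfl⟩, hmax⟩ := BddAbove.exists_isGreatest_of_nonempty
    (S := (fun η => finrank K (V.map (LinearMap.mulLeft K η))) '' W)
    ⟨finrank K V, by rintro _ ⟨η, -, rfl⟩; exact Submodule.finrank_map_le _ _⟩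
    ⟨_, 0, W.zero_mem, rfl⟩
  exact ⟨η, hη, fun η' hη' => hmax ⟨η', hη', rfl⟩⟩

section Graded

variable {K R : Type*} [Field K] [CommRing R] [Algebra K R]

/-- `ℓ` plays the role of the identification `R^N ≅ ℂ`, extended to all of `R`. -/
def IsSeparatingTrace (ℓ : Dual K R) (𝒜 : ℕ → Submodule K R) (N : ℕ) : Prop :=
  ∀ a ≤ N, ∀ x ∈ 𝒜 a, (∀ y ∈ 𝒜 (N - a), ℓ (x * y) = 0) → x = 0

variable {𝒜 : ℕ → Submodule K R} {N : ℕ} [SetLike.GradedMul 𝒜] {ℓ : Dual K R}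

theorem exists_isSeparatingTrace (hsoc : finrank K (𝒜 N) = 1)
    (hperf : ∀ a ≤ N, ∀ x ∈ 𝒜 a, x ≠ 0 → ∃ y ∈ 𝒜 (N - a), x * y ≠ 0) :
    ∃ ℓ : Dual K R, IsSeparatingTrace ℓ 𝒜 N := by
  have : Module.Finite K (𝒜 N) := Module.finite_of_finrank_eq_succ hsoc
  let φ : 𝒜 N ≃ₗ[K] K := LinearEquiv.ofFinrankEq _ _ (by simp [hsoc])
  obtain ⟨ℓ, hℓ⟩ := LinearMap.exists_extend φ.toLinearMap
  refine ⟨ℓ, fun a ha x hx h => by_contra fun hx0 => ?_⟩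
  obtain ⟨y, hy, hxy⟩ := hperf a ha x hx hx0
  have hmem : x * y ∈ 𝒜 N := by simpa [Nat.add_sub_cancel' ha] using SetLike.mul_mem_graded hx hy
  have hφ : φ ⟨x * y, hmem⟩ = 0 := (LinearMap.congr_fun hℓ ⟨x * y, hmem⟩).symm.trans (h y hy)
  exact hxy (congrArg Subtype.val (φ.map_eq_zero_iff.mp hφ))

theorem finrank_range_mulForm_eq (hℓ : IsSeparatingTrace ℓ 𝒜 N) {a e : ℕ}
    (hN : a + e + e = N) [FiniteDimensional K (𝒜 e)] {η : R} (hη : η ∈ 𝒜 a) :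
    finrank K (LinearMap.range (mulForm ℓ (𝒜 e) η)) =
      finrank K ((𝒜 e).map (LinearMap.mulLeft K η)) := by
  set μ := LinearMap.mulLeft K η ∘ₗ (𝒜 e).subtype
  have hker : LinearMap.ker (mulForm ℓ (𝒜 e) η) = LinearMap.ker μ := by
    refine le_antisymm (fun u hu => ?_) (LinearMap.ker_le_ker_comp _ _)
    refine hℓ (a + e) (by omega) (η * u) (SetLike.mul_mem_graded hη u.2) fun y hy => ?_
    rw [show N - (a + e) = e by omega] at hy
    exact LinearMap.congr_fun (LinearMap.mem_ker.mp hu) ⟨y, hy⟩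
  have h1 := (mulForm ℓ (𝒜 e) η).finrank_range_add_finrank_ker
  have h2 := μ.finrank_range_add_finrank_ker
  rw [hker] at h1
  rw [LinearMap.range_comp, Submodule.range_subtype] at h2
  omega

theorem mul_self_eq_zero_of_mul_eq_zero_of_forall_finrank_le [Infinite K]
    (hℓ : IsSeparatingTrace ℓ 𝒜 N) {a e : ℕ} (hN : a + e + e = N) [FiniteDimensional K (𝒜 e)]
    {η : R} (hη : η ∈ 𝒜 a)
    (hmax : ∀ η' ∈ 𝒜 a, finrank K ((𝒜 e).map (LinearMap.mulLeft K η')) ≤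
      finrank K ((𝒜 e).map (LinearMap.mulLeft K η)))
    {α : R} (hα : α ∈ 𝒜 e) (hηα : η * α = 0) : α * α = 0 := by
  refine hℓ (e + e) (by omega) (α * α) (SetLike.mul_mem_graded hα hα) fun γ hγ => ?_
  rw [show N - (e + e) = a by omega] at hγ
  have hrank (t : K) : finrank K (LinearMap.range (mulForm ℓ (𝒜 e) η + t • mulForm ℓ (𝒜 e) γ)) ≤
      finrank K (LinearMap.range (mulForm ℓ (𝒜 e) η)) := by
    rw [← mulForm_add_smul, finrank_range_mulForm_eq hℓ hN hη]
    exact (finrank_range_mulForm_le ℓ _ _).trans (hmax _ (add_mem hη (Submodule.smul_mem _ t hγ)))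
  have := LinearMap.BilinForm.apply_apply_eq_zero_of_finrank_range_add_smul_le
    (mulForm_isSymm ℓ (𝒜 e) η) hrank (α := ⟨α, hα⟩) (by ext y; simp [hηα])
  rwa [mulForm_apply, mul_rotate] at this

end Graded

theorem stmt18_general {R : Type*} [CommRing R] [Algebra ℂ R]
    (𝒜 : ℕ → Submodule ℂ R) [GradedAlgebra 𝒜] (N : ℕ)
    (hfin : ∀ s, Module.Finite ℂ (𝒜 s))
    (hsoc : finrank ℂ (𝒜 N) = 1)
    (hperf : ∀ a ≤ N, ∀ x ∈ 𝒜 a, x ≠ 0 → ∃ y ∈ 𝒜 (N - a), x * y ≠ 0)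
    (e : ℕ) (h2e : 2 * e ≤ N)
    (hnoninj : ∀ η ∈ 𝒜 (N - 2 * e), ∃ α ∈ 𝒜 e, α ≠ 0 ∧ η * α = 0) :
    (∀ η ∈ 𝒜 (N - 2 * e),
      (∀ η' ∈ 𝒜 (N - 2 * e),
        finrank ℂ (Submodule.map (LinearMap.mulLeft ℂ η') (𝒜 e))
          ≤ finrank ℂ (Submodule.map (LinearMap.mulLeft ℂ η) (𝒜 e))) →
      ∀ α ∈ 𝒜 e, η * α = 0 → α * α = 0) ∧
    (∃ α ∈ 𝒜 e, α ≠ 0 ∧ α * α = 0) := by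
  have := hfin e
  obtain ⟨ℓ, hℓ⟩ := exists_isSeparatingTrace hsoc hperf
  have hN : N - 2 * e + e + e = N := by omega
  obtain ⟨η, hη, hmax⟩ := exists_forall_finrank_map_mulLeft_le (𝒜 e) (𝒜 (N - 2 * e))
  obtain ⟨α, hα, hα0, hηα⟩ := hnoninj η hη
  exact ⟨fun η hη hmax α hα hηα =>
      mul_self_eq_zero_of_mul_eq_zero_of_forall_finrank_le hℓ hN hη hmax hα hηα,
    α, hα, hα0, mul_self_eq_zero_of_mul_eq_zero_of_forall_finrank_le hℓ hN hη hmax hα hηα⟩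

/-- In a graded Artinian Gorenstein ℂ-algebra with socle in degree `N`,
with `e ≥ 1`, `2e ≤ N`, if multiplication `·η : R^e → R^(N-e)` fails to be injective for
every `η ∈ R^(N-2e)`, then the set `Y = {α ∈ R^e : α² = 0}` contains the kernel of `·η`
for every `η ∈ R^(N-2e)` of maximal rank; in particular `Y ≠ {0}`. -/
theorem stmt18 {R : Type*} [CommRing R] [Algebra ℂ R]
    (𝒜 : ℕ → Submodule ℂ R) [GradedAlgebra 𝒜] (N : ℕ)
    (hvanish : ∀ s, N < s → 𝒜 s = ⊥)
    (hfin : ∀ s, Module.Finite ℂ (𝒜 s))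
    (h0 : finrank ℂ (𝒜 0) = 1) (hsoc : finrank ℂ (𝒜 N) = 1)
    (hperf : ∀ a ≤ N, ∀ x ∈ 𝒜 a, x ≠ 0 → ∃ y ∈ 𝒜 (N - a), x * y ≠ 0)
    (e : ℕ) (he : 1 ≤ e) (h2e : 2 * e ≤ N)
    (hnoninj : ∀ η ∈ 𝒜 (N - 2 * e), ∃ α ∈ 𝒜 e, α ≠ 0 ∧ η * α = 0) :
    (∀ η ∈ 𝒜 (N - 2 * e),
      (∀ η' ∈ 𝒜 (N - 2 * e),
        finrank ℂ (Submodule.map (LinearMap.mulLeft ℂ η') (𝒜 e))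
          ≤ finrank ℂ (Submodule.map (LinearMap.mulLeft ℂ η) (𝒜 e))) →
      ∀ α ∈ 𝒜 e, η * α = 0 → α * α = 0) ∧
    (∃ α ∈ 𝒜 e, α ≠ 0 ∧ α * α = 0) :=
  stmt18_general 𝒜 N hfin hsoc hperf e h2e hnoninj
end
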